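/- For Y ∈ ℝ let X(Y) denote the real 2×2 matrix with rows (0, −exp(Y/2)) and (exp(−Y/2), 0), let L be the 2×2 matrix with rows (0, 1) and (−1, −1), and let φ(t) = log(1 + exp t). Then for all real numbers C, D, Z: X(C) · L · X(D) = X(C − φ(−Z)) · L · X(−Z) · L · X(D + φ(Z)). -/

import Mathlib

open Matrix

/-- The edge matrix `X(Y)` of Fock's fat-graph description. -/
noncomputable def edgeMatrix (Y : ℝ) : Matrix (Fin 2) (Fin 2) ℝ :=
  !![0, -Real.exp (Y / 2); Real.exp (-Y / 2), 0]

/-- The left-turn matrix `L`. -/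
def leftTurn : Matrix (Fin 2) (Fin 2) ℝ := !![0, 1; -1, -1]

/-- `φ(t) = log(1 + exp t)`. -/
noncomputable def phiFlip (t : ℝ) : ℝ := Real.log (1 + Real.exp t)

lemma phi_shift (Z : ℝ) : phiFlip Z = Z + phiFlip (-Z) := by
  unfold phiFlip
  rw [← Real.log_exp Z, ← Real.log_mul (Real.exp_ne_zero _) (by positivity)]
  congr 1
  rw [Real.exp_neg]
  have h := Real.exp_ne_zero Z
  field_simp
  rw [Real.exp_log (Real.exp_pos Z)]
  ring

lemma exp_phi_neg (Z : ℝ) : Real.exp (phiFlip (-Z)) = 1 + Real.exp (-Z) :=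
  Real.exp_log (by positivity)

/-- The third flip identity of Lemma 2.4:
`X(C)·L·X(D) = X(C − φ(−Z))·L·X(−Z)·L·X(D + φ(Z))`. -/
theorem flip_identity_LL (C D Z : ℝ) :
    edgeMatrix C * leftTurn * edgeMatrix D =
      edgeMatrix (C - phiFlip (-Z)) * leftTurn * edgeMatrix (-Z) * leftTurn *
        edgeMatrix (D + phiFlip Z) := by
  rw [phi_shift Z]
  set p := phiFlip (-Z) with hp
  have hsq : Real.exp (p / 2) * Real.exp (p / 2) = 1 + Real.exp (-Z) := by
    rw [← Real.exp_add, show p / 2 + p / 2 = p by ring, exp_phi_neg]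
  have hsq' : Real.exp (p / 2) * Real.exp (p / 2) * (Real.exp (Z / 2) * Real.exp (Z / 2)) =
      Real.exp (Z / 2) * Real.exp (Z / 2) + 1 := by
    rw [hsq, ← Real.exp_add, show Z / 2 + Z / 2 = Z by ring, Real.exp_neg]
    have h := Real.exp_ne_zero Z
    field_simp
  ext i j
  fin_cases i <;> fin_cases j <;>
    simp [edgeMatrix, leftTurn, Matrix.mul_apply, Fin.sum_univ_succ, add_div,
      sub_div, neg_div, Real.exp_add, Real.exp_sub, Real.exp_neg]
  all_goals field_simp
  all_goals first
    | linear_combination (Real.exp (C / 2) * Real.exp (p / 2) * Real.exp (D / 2)) * hsq'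
    | ring
  all_goals (rw [mul_one_div, mul_one_div]; linear_combination hsq')
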